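/- arXiv:1912.03086 — 4 statements merged into one kernel-verified Lean document; each statement's English description precedes it below -/
import Mathlib

section
/- For any two sequences of positive integers u_1,...,u_m and v_1,...,v_m (with m ≥ 1), one has ∑_{s=1}^m (u_s + log₂ v_s) ≥ 1 + log₂(∑_{s=1}^m u_s v_s). -/
/-!
Since `v_s ≥ 1` divides `∏ v`, we get `∑ u_s v_s ≤ (∑ u) ∏ v`, and `2n ≤ 2ⁿ` for `n = ∑ u ≥ 1`
upgrades this to `2 ∑ u_s v_s ≤ 2^(∑ u) ∏ v`. Taking `log₂` of both sides gives the claim.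
-/

open Finset

theorem Nat.two_mul_le_two_pow {n : ℕ} (hn : 1 ≤ n) : 2 * n ≤ 2 ^ n := by
  obtain ⟨k, rfl⟩ := Nat.exists_eq_add_of_le' hn
  have := Nat.lt_two_pow_self (n := k)
  rw [pow_succ']
  omega

theorem Nat.sum_mul_le_sum_mul_prod {ι : Type*} (s : Finset ι) (u v : ι → ℕ)
    (hv : ∀ i ∈ s, 0 < v i) :
    ∑ i ∈ s, u i * v i ≤ (∑ i ∈ s, u i) * ∏ i ∈ s, v i := by
  rw [sum_mul]
  gcongr with i hi
  exact Nat.le_of_dvd (prod_pos hv) (dvd_prod_of_mem v hi)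

theorem Nat.two_mul_sum_mul_le_two_pow_sum_mul_prod {ι : Type*} (s : Finset ι) (u v : ι → ℕ)
    (hu : 1 ≤ ∑ i ∈ s, u i) (hv : ∀ i ∈ s, 0 < v i) :
    2 * ∑ i ∈ s, u i * v i ≤ 2 ^ (∑ i ∈ s, u i) * ∏ i ∈ s, v i :=
  calc 2 * ∑ i ∈ s, u i * v i ≤ 2 * ((∑ i ∈ s, u i) * ∏ i ∈ s, v i) := by
        gcongr; exact sum_mul_le_sum_mul_prod s u v hv
    _ ≤ 2 ^ (∑ i ∈ s, u i) * ∏ i ∈ s, v i := by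
        rw [← mul_assoc]; gcongr; exact two_mul_le_two_pow hu

/-- For any two sequences of positive integers `u_1,...,u_m` and `v_1,...,v_m` (with `m ≥ 1`),
`∑ (u_s + log₂ v_s) ≥ 1 + log₂ (∑ u_s * v_s)`, where `log₂` is the real base-2 logarithm. -/
theorem sum_add_logb_ge_one_add_logb_sum (m : ℕ) (hm : 1 ≤ m) (u v : Fin m → ℕ)
    (hu : ∀ s, 0 < u s) (hv : ∀ s, 0 < v s) :
    ∑ s, ((u s : ℝ) + Real.logb 2 (v s)) ≥
      1 + Real.logb 2 ((∑ s, u s * v s : ℕ) : ℝ) := by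
  have : Nonempty (Fin m) := ⟨⟨0, hm⟩⟩
  have hU : 0 < ∑ s, u s := sum_pos (fun s _ ↦ hu s) univ_nonempty
  have hT : 0 < ∑ s, u s * v s := sum_pos (fun s _ ↦ Nat.mul_pos (hu s) (hv s)) univ_nonempty
  have hP : (0 : ℝ) < ∏ s, (v s : ℝ) := prod_pos fun s _ ↦ by exact_mod_cast hv s
  have key : 2 * ∑ s, (u s : ℝ) * v s ≤ 2 ^ (∑ s, u s) * ∏ s, (v s : ℝ) := by
    exact_mod_cast Nat.two_mul_sum_mul_le_two_pow_sum_mul_prod univ u v hU fun s _ ↦ hv s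
  calc 1 + Real.logb 2 ((∑ s, u s * v s : ℕ) : ℝ)
      = Real.logb 2 (2 * ∑ s, (u s : ℝ) * v s) := by
        rw [Real.logb_mul two_ne_zero (by exact_mod_cast hT.ne'), Real.logb_self_eq_one one_lt_two]
        push_cast; rfl
    _ ≤ Real.logb 2 (2 ^ (∑ s, u s) * ∏ s, (v s : ℝ)) :=
        Real.logb_le_logb_of_le one_lt_two (by exact_mod_cast Nat.mul_pos two_pos hT) key
    _ = ∑ s, ((u s : ℝ) + Real.logb 2 (v s)) := by
        rw [Real.logb_mul (by positivity) hP.ne', Real.logb_pow, Real.logb_self_eq_one one_lt_two,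
          Real.logb_prod _ _ fun s _ ↦ by exact_mod_cast (hv s).ne', sum_add_distrib]
        push_cast; ring
end

section
/- Let m ≥ 1, let j_1,...,j_m be positive integers and k_1,...,k_m be positive integers with ∑_{s=1}^m k_s · j_s = n. Then ∑_{s=1}^m (k_s - 1 + log₂ j_s) + m - 1 ≥ log₂ n. -/
/-!
Since `k ≤ 2 ^ (k - 1)` for every natural `k ≥ 1`, we have `log₂ (k j) ≤ k - 1 + log₂ j`; and a sum
of `m` reals `≥ 1` is at most `m` times their product, so taking `log₂` costs at most
`log₂ m ≤ m - 1` beyond the sum of the logarithms.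
-/

open Finset Real

theorem Nat.le_two_pow_pred (r : ℕ) : r ≤ 2 ^ (r - 1) := by
  cases r with
  | zero => exact Nat.zero_le _
  | succ t => exact Nat.lt_two_pow_self

theorem Real.logb_two_natCast_le_sub_one {r : ℕ} (hr : 1 ≤ r) : logb 2 r ≤ r - 1 := by
  have hpow : (r : ℝ) ≤ 2 ^ (r - 1) := by exact_mod_cast Nat.le_two_pow_pred r
  calc logb 2 r ≤ logb 2 (2 ^ (r - 1)) := logb_le_logb_of_le one_lt_two (by exact_mod_cast hr) hpow
    _ = r - 1 := by rw [logb_pow, logb_self_eq_one one_lt_two, mul_one, Nat.cast_sub hr, Nat.cast_one]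

theorem Finset.sum_le_card_mul_prod {ι : Type*} {s : Finset ι} {x : ι → ℝ}
    (hx : ∀ i ∈ s, 1 ≤ x i) : ∑ i ∈ s, x i ≤ #s * ∏ i ∈ s, x i := by
  calc ∑ i ∈ s, x i ≤ ∑ _i ∈ s, ∏ i ∈ s, x i :=
        sum_le_sum fun i hi => by
          simpa using prod_le_prod_of_subset_of_one_le (singleton_subset_iff.mpr hi)
            (by simpa using zero_le_one.trans (hx i hi)) fun j hj _ => hx j hj
    _ = #s * ∏ i ∈ s, x i := by rw [sum_const, nsmul_eq_mul]

theorem Real.logb_two_sum_le {ι : Type*} {s : Finset ι} (hs : s.Nonempty) {x : ι → ℝ}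
    (hx : ∀ i ∈ s, 1 ≤ x i) : logb 2 (∑ i ∈ s, x i) ≤ #s - 1 + ∑ i ∈ s, logb 2 (x i) := by
  have hsum_pos : 0 < ∑ i ∈ s, x i := sum_pos (fun i hi => one_pos.trans_le (hx i hi)) hs
  have hx_ne : ∀ i ∈ s, x i ≠ 0 := fun i hi => (one_pos.trans_le (hx i hi)).ne'
  calc logb 2 (∑ i ∈ s, x i) ≤ logb 2 (#s * ∏ i ∈ s, x i) :=
        logb_le_logb_of_le one_lt_two hsum_pos (sum_le_card_mul_prod hx)
    _ = logb 2 #s + ∑ i ∈ s, logb 2 (x i) := by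
        rw [logb_mul (by exact_mod_cast hs.card_pos.ne') (prod_ne_zero_iff.mpr hx_ne),
          logb_prod s x hx_ne]
    _ ≤ #s - 1 + ∑ i ∈ s, logb 2 (x i) := by
        gcongr
        exact logb_two_natCast_le_sub_one hs.card_pos

theorem sum_conn_ge_logb_general (m : ℕ) (hm : 1 ≤ m) (j k : Fin m → ℕ) (n : ℕ)
    (hj : ∀ s, 0 < j s) (hk : ∀ s, 0 < k s)
    (hsum : ∑ s, k s * j s = n) :
    (∑ s, ((k s : ℝ) - 1 + Real.logb 2 (j s))) + m - 1 ≥ Real.logb 2 n := by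
  have hterm : ∀ s, logb 2 ((k s : ℝ) * j s) ≤ k s - 1 + logb 2 (j s) := fun s => by
    rw [logb_mul (by exact_mod_cast (hk s).ne') (by exact_mod_cast (hj s).ne')]
    linarith [logb_two_natCast_le_sub_one (hk s)]
  have hone : ∀ s ∈ univ, (1 : ℝ) ≤ k s * j s := fun s _ => by
    exact_mod_cast Nat.mul_pos (hk s) (hj s)
  calc logb 2 n = logb 2 (∑ s, (k s : ℝ) * j s) := by rw [← hsum]; push_cast; rfl
    _ ≤ m - 1 + ∑ s, logb 2 ((k s : ℝ) * j s) := by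
        simpa using logb_two_sum_le ⟨⟨0, hm⟩, mem_univ _⟩ hone
    _ ≤ m - 1 + ∑ s, ((k s : ℝ) - 1 + logb 2 (j s)) := by gcongr with s; exact hterm s
    _ = _ := by ring

/-- Let `m ≥ 1`, `j_1,...,j_m` and `k_1,...,k_m` positive integers with `∑ k_s * j_s = n`.
Then `∑ (k_s - 1 + log₂ j_s) + m - 1 ≥ log₂ n`, with `log₂` the real base-2 logarithm. -/
theorem sum_conn_ge_logb (m : ℕ) (hm : 1 ≤ m) (j k : Fin m → ℕ) (n : ℕ) (hn : 0 < n)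
    (hj : ∀ s, 0 < j s) (hk : ∀ s, 0 < k s)
    (hsum : ∑ s, k s * j s = n) :
    (∑ s, ((k s : ℝ) - 1 + Real.logb 2 (j s))) + m - 1 ≥ Real.logb 2 n :=
  sum_conn_ge_logb_general m hm j k n hj hk hsum
end

section
/- For R-modules A and B over a commutative ring R and any natural number i, the i-th exterior power of A ⊕ B is isomorphic to the direct sum over k + l = i of Λ^k A ⊗ Λ^l B. -/
open TensorProduct DirectSum ExteriorAlgebra GradedTensorProduct

namespace ExtProdAux

variable {R : Type} [CommRing R] {M N : Type} [AddCommGroup M] [Module R M]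
  [AddCommGroup N] [Module R N]

lemma ι_mem (x : M) : ι R x ∈ ⋀[R]^1 M := by
  show _ ∈ LinearMap.range (ι R (M := M)) ^ 1
  rw [pow_one]; exact LinearMap.mem_range_self _ x


lemma mul_mem_add {k l : ℕ} {x y : ExteriorAlgebra R M}
    (hx : x ∈ ⋀[R]^k M) (hy : y ∈ ⋀[R]^l M) : x * y ∈ ⋀[R]^(k+l) M := by
  show _ ∈ LinearMap.range (ι R (M := M)) ^ (k+l)
  rw [pow_add]
  exact Submodule.mul_mem_mul hx hy

lemma map_mem (f : M →ₗ[R] N) {k : ℕ} {x : ExteriorAlgebra R M} (hx : x ∈ ⋀[R]^k M) :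
    ExteriorAlgebra.map f x ∈ ⋀[R]^k N := by
  have h1 : Submodule.map (ExteriorAlgebra.map f).toLinearMap
      (LinearMap.range (ι R (M := M))) ≤ LinearMap.range (ι R (M := N)) := by
    rintro y ⟨x, ⟨m, rfl⟩, rfl⟩
    exact ⟨f m, (ExteriorAlgebra.map_apply_ι f m).symm⟩
  have pow_mono : ∀ (P Q : Submodule R (ExteriorAlgebra R N)), P ≤ Q → ∀ k : ℕ, P ^ k ≤ Q ^ k := by
    intro P Q h k
    induction k with
    | zero => exact le_rfl
    | succ n ih => rw [pow_succ, pow_succ]; exact mul_le_mul' ih h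
  have h2 : Submodule.map (ExteriorAlgebra.map f).toLinearMap (⋀[R]^k M) ≤ ⋀[R]^k N := by
    rw [show (⋀[R]^k M) = LinearMap.range (ι R (M := M)) ^ k from rfl,
      Submodule.map_pow]
    exact pow_mono _ _ h1 k
  exact h2 (Submodule.mem_map_of_mem hx)



lemma mem0 (r : R) : algebraMap R (ExteriorAlgebra R M) r ∈ ⋀[R]^0 M := by
  show _ ∈ LinearMap.range (ι R (M := M)) ^ 0
  rw [pow_zero]; exact Submodule.mem_one.mpr ⟨r, rfl⟩

lemma one_mem0 : (1 : ExteriorAlgebra R M) ∈ ⋀[R]^0 M := by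
  simpa only [map_one] using mem0 (M := M) (1 : R)

lemma ι_mul_mem {k : ℕ} {x : ExteriorAlgebra R M} (m : M) (hx : x ∈ ⋀[R]^k M) :
    ι R m * x ∈ ⋀[R]^(k+1) M := by
  show _ ∈ LinearMap.range (ι R (M := M)) ^ (k+1)
  rw [pow_succ']
  exact Submodule.mul_mem_mul (LinearMap.mem_range_self _ m) hx

lemma supercomm (m : M) {k : ℕ} {z : ExteriorAlgebra R M} (hz : z ∈ ⋀[R]^k M) :
    ι R m * z = ((-1 : R) ^ k) • (z * ι R m) := by
  refine Submodule.pow_induction_on_left'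
    (M := LinearMap.range (ι R (M := M)))
    (C := fun n z _ => ι R m * z = ((-1 : R) ^ n) • (z * ι R m)) ?_ ?_ ?_ hz
  · intro r
    rw [pow_zero, one_smul, Algebra.commutes]
  · intro x y n hx hy ihx ihy
    rw [mul_add, ihx, ihy, add_mul, smul_add]
  · rintro m' ⟨a, rfl⟩ n x hx ih
    have hswap : ι R m * ι R a = -(ι R a * ι R m) :=
      eq_neg_of_add_eq_zero_left (ExteriorAlgebra.ι_add_mul_swap m a)
    calc ι R m * (ι R a * x) = (ι R m * ι R a) * x := (mul_assoc _ _ _).symm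
      _ = -(ι R a * (ι R m * x)) := by rw [hswap, neg_mul, mul_assoc]
      _ = -(ι R a * (((-1 : R) ^ n) • (x * ι R m))) := by rw [ih]
      _ = ((-1 : R) ^ (n+1)) • ((ι R a * x) * ι R m) := by
          rw [mul_smul_comm, ← neg_smul, pow_succ, mul_assoc]
          ring_nf


variable (R M N)

variable (A B : Type) [AddCommGroup A] [Module R A] [AddCommGroup B] [Module R B]

/-- the linear map `A × B → ΛA ᵍ⊗ ΛB` -/
noncomputable def fPre : (A × B) →ₗ[R]
    ((fun k : ℕ => ⋀[R]^k A) ᵍ⊗[R] (fun k : ℕ => ⋀[R]^k B)) :=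
  (GradedTensorProduct.includeLeft _ _).toLinearMap ∘ₗ ι R ∘ₗ LinearMap.fst R A B
    + (GradedTensorProduct.includeRight _ _).toLinearMap ∘ₗ ι R ∘ₗ LinearMap.snd R A B

lemma fPre_apply (m : A × B) :
    fPre R A B m = (ι R m.1) ᵍ⊗ₜ[R] (1 : ExteriorAlgebra R B)
      + (1 : ExteriorAlgebra R A) ᵍ⊗ₜ[R] (ι R m.2) := rfl

lemma fPre_sq (m : A × B) : fPre R A B m * fPre R A B m = 0 := by
  rw [fPre_apply, add_mul, mul_add, mul_add]
  have t11 : ((ι R m.1) ᵍ⊗ₜ[R] (1 : ExteriorAlgebra R B)) * ((ι R m.1) ᵍ⊗ₜ[R] (1 : ExteriorAlgebra R B))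
      = (0 : (fun k : ℕ => ⋀[R]^k A) ᵍ⊗[R] (fun k : ℕ => ⋀[R]^k B)) := by
    have := map_mul (GradedTensorProduct.includeLeft (fun k : ℕ => ⋀[R]^k A) (fun k : ℕ => ⋀[R]^k B)) (ι R m.1) (ι R m.1)
    simp only [includeLeft_apply] at this
    rw [← this, ι_sq_zero]
    show GradedTensorProduct.of R _ _ ((0 : ExteriorAlgebra R A) ⊗ₜ[R] (1 : ExteriorAlgebra R B)) = 0
    rw [TensorProduct.zero_tmul]
    exact (GradedTensorProduct.of R _ _).map_zero
  have t22 : ((1 : ExteriorAlgebra R A) ᵍ⊗ₜ[R] (ι R m.2)) * ((1 : ExteriorAlgebra R A) ᵍ⊗ₜ[R] (ι R m.2))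
      = (0 : (fun k : ℕ => ⋀[R]^k A) ᵍ⊗[R] (fun k : ℕ => ⋀[R]^k B)) := by
    have := map_mul (GradedTensorProduct.includeRight (fun k : ℕ => ⋀[R]^k A) (fun k : ℕ => ⋀[R]^k B)) (ι R m.2) (ι R m.2)
    simp only [includeRight_apply] at this
    rw [← this, ι_sq_zero]
    show GradedTensorProduct.of R _ _ ((1 : ExteriorAlgebra R A) ⊗ₜ[R] (0 : ExteriorAlgebra R B)) = 0
    rw [TensorProduct.tmul_zero]
    exact (GradedTensorProduct.of R _ _).map_zero
  have t12 : ((ι R m.1) ᵍ⊗ₜ[R] (1 : ExteriorAlgebra R B)) * ((1 : ExteriorAlgebra R A) ᵍ⊗ₜ[R] (ι R m.2))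
      = (ι R m.1) ᵍ⊗ₜ[R] (ι R m.2) :=
    tmul_one_mul_one_tmul (fun k : ℕ => ⋀[R]^k A) (fun k : ℕ => ⋀[R]^k B) _ _
  have t21 : ((1 : ExteriorAlgebra R A) ᵍ⊗ₜ[R] (ι R m.2)) * ((ι R m.1) ᵍ⊗ₜ[R] (1 : ExteriorAlgebra R B))
      = -(((ι R m.1) ᵍ⊗ₜ[R] (ι R m.2) : (fun k : ℕ => ⋀[R]^k A) ᵍ⊗[R] (fun k : ℕ => ⋀[R]^k B))) := by
    have := tmul_coe_mul_coe_tmul (R := R) (ι := ℕ) (fun k : ℕ => ⋀[R]^k A) (fun k : ℕ => ⋀[R]^k B)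
      (1 : ExteriorAlgebra R A) (⟨ι R m.2, ι_mem m.2⟩ : ⋀[R]^1 B)
      (⟨ι R m.1, ι_mem m.1⟩ : ⋀[R]^1 A) (1 : ExteriorAlgebra R B)
    simpa using this
  rw [t11, t22, t12, t21]
  abel


/-- The algebra morphism `Λ(A × B) → ΛA ᵍ⊗ ΛB`. -/
noncomputable def hAlg : ExteriorAlgebra R (A × B) →ₐ[R]
    ((fun k : ℕ => ⋀[R]^k A) ᵍ⊗[R] (fun k : ℕ => ⋀[R]^k B)) :=
  ExteriorAlgebra.lift R ⟨fPre R A B, fPre_sq R A B⟩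

lemma hAlg_ι (m : A × B) : hAlg R A B (ι R m) = fPre R A B m := by
  unfold hAlg
  exact ExteriorAlgebra.lift_ι_apply R (fPre R A B) (fPre_sq R A B) m

lemma hAlg_map_inl (x : ExteriorAlgebra R A) :
    hAlg R A B (ExteriorAlgebra.map (LinearMap.inl R A B) x)
      = GradedTensorProduct.includeLeft (fun k : ℕ => ⋀[R]^k A) (fun k : ℕ => ⋀[R]^k B) x := by
  have : (hAlg R A B).comp (ExteriorAlgebra.map (LinearMap.inl R A B))
      = GradedTensorProduct.includeLeft (fun k : ℕ => ⋀[R]^k A) (fun k : ℕ => ⋀[R]^k B) := by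
    apply ExteriorAlgebra.hom_ext
    ext a
    have hz : ((1 : ExteriorAlgebra R A) ᵍ⊗ₜ[R] (ι R ((0 : B))) :
        (fun k : ℕ => ⋀[R]^k A) ᵍ⊗[R] (fun k : ℕ => ⋀[R]^k B)) = 0 := by
      rw [map_zero]
      show GradedTensorProduct.of R _ _ ((1 : ExteriorAlgebra R A) ⊗ₜ[R] (0 : ExteriorAlgebra R B)) = 0
      rw [TensorProduct.tmul_zero, (GradedTensorProduct.of R _ _).map_zero]
    simp only [LinearMap.coe_comp, Function.comp_apply, AlgHom.toLinearMap_apply,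
      AlgHom.comp_apply, ExteriorAlgebra.map_apply_ι, hAlg_ι, fPre_apply, includeLeft_apply,
      LinearMap.inl_apply]
    rw [hz, add_zero]
  exact DFunLike.congr_fun this x

lemma hAlg_map_inr (y : ExteriorAlgebra R B) :
    hAlg R A B (ExteriorAlgebra.map (LinearMap.inr R A B) y)
      = GradedTensorProduct.includeRight (fun k : ℕ => ⋀[R]^k A) (fun k : ℕ => ⋀[R]^k B) y := by
  have : (hAlg R A B).comp (ExteriorAlgebra.map (LinearMap.inr R A B))
      = GradedTensorProduct.includeRight (fun k : ℕ => ⋀[R]^k A) (fun k : ℕ => ⋀[R]^k B) := by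
    apply ExteriorAlgebra.hom_ext
    ext b
    have hz : ((ι R ((0 : A))) ᵍ⊗ₜ[R] (1 : ExteriorAlgebra R B) :
        (fun k : ℕ => ⋀[R]^k A) ᵍ⊗[R] (fun k : ℕ => ⋀[R]^k B)) = 0 := by
      rw [map_zero]
      show GradedTensorProduct.of R _ _ ((0 : ExteriorAlgebra R A) ⊗ₜ[R] (1 : ExteriorAlgebra R B)) = 0
      rw [TensorProduct.zero_tmul, (GradedTensorProduct.of R _ _).map_zero]
    simp only [LinearMap.coe_comp, Function.comp_apply, AlgHom.toLinearMap_apply,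
      AlgHom.comp_apply, ExteriorAlgebra.map_apply_ι, hAlg_ι, fPre_apply, includeRight_apply,
      LinearMap.inr_apply]
    rw [hz, zero_add]
  exact DFunLike.congr_fun this y

lemma hAlg_mul (x : ExteriorAlgebra R A) (y : ExteriorAlgebra R B) :
    hAlg R A B (ExteriorAlgebra.map (LinearMap.inl R A B) x
        * ExteriorAlgebra.map (LinearMap.inr R A B) y)
      = x ᵍ⊗ₜ[R] y := by
  rw [map_mul, hAlg_map_inl, hAlg_map_inr, includeLeft_apply, includeRight_apply]
  exact tmul_one_mul_one_tmul (fun k : ℕ => ⋀[R]^k A) (fun k : ℕ => ⋀[R]^k B) x y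


variable (i : ℕ)

/-- Components of the map from the direct sum into `Λ^i (A × B)`. -/
noncomputable def mu (p : {p : ℕ × ℕ // p.1 + p.2 = i}) :
    ((⋀[R]^(p.val.1) A) ⊗[R] (⋀[R]^(p.val.2) B)) →ₗ[R] (⋀[R]^i (A × B)) :=
  TensorProduct.lift
    (LinearMap.mk₂ R
      (fun x y => (⟨ExteriorAlgebra.map (LinearMap.inl R A B) (x : ExteriorAlgebra R A)
          * ExteriorAlgebra.map (LinearMap.inr R A B) (y : ExteriorAlgebra R B), by
        have := mul_mem_add (M := A × B)
          (map_mem (LinearMap.inl R A B) x.2) (map_mem (LinearMap.inr R A B) y.2)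
        rwa [p.2] at this⟩ : ⋀[R]^i (A × B)))
      (fun x₁ x₂ y => by ext; simp [add_mul])
      (fun c x y => by ext; simp [map_smul, smul_mul_assoc])
      (fun x y₁ y₂ => by ext; simp [mul_add])
      (fun c x y => by ext; simp [map_smul, mul_smul_comm]))

lemma mu_tmul (p : {p : ℕ × ℕ // p.1 + p.2 = i}) (x : ⋀[R]^(p.val.1) A) (y : ⋀[R]^(p.val.2) B) :
    ((mu R A B i p (x ⊗ₜ[R] y) : ⋀[R]^i (A × B)) : ExteriorAlgebra R (A × B))
      = ExteriorAlgebra.map (LinearMap.inl R A B) (x : ExteriorAlgebra R A)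
          * ExteriorAlgebra.map (LinearMap.inr R A B) (y : ExteriorAlgebra R B) := rfl

/-- The map from the direct sum to `Λ^i (A × B)`. -/
noncomputable def Phi : (⨁ (p : {p : ℕ × ℕ // p.1 + p.2 = i}),
      ((⋀[R]^(p.val.1) A) ⊗[R] (⋀[R]^(p.val.2) B))) →ₗ[R] (⋀[R]^i (A × B)) :=
  DirectSum.toModule R _ _ (mu R A B i)

/-- Projection from the full direct sum over `ℕ × ℕ` onto the fiber over `i`. -/
noncomputable def proj : (⨁ (q : ℕ × ℕ), ((⋀[R]^(q.1) A) ⊗[R] (⋀[R]^(q.2) B))) →ₗ[R]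
    (⨁ (p : {p : ℕ × ℕ // p.1 + p.2 = i}), ((⋀[R]^(p.val.1) A) ⊗[R] (⋀[R]^(p.val.2) B))) :=
  DirectSum.toModule R _ _ (fun q =>
    if h : q.1 + q.2 = i then
      (DirectSum.lof R {p : ℕ × ℕ // p.1 + p.2 = i}
        (fun p => ((⋀[R]^(p.val.1) A) ⊗[R] (⋀[R]^(p.val.2) B))) ⟨q, h⟩)
    else 0)

/-- The map from `Λ^i (A × B)` to the direct sum. -/
noncomputable def Psi : (⋀[R]^i (A × B)) →ₗ[R] (⨁ (p : {p : ℕ × ℕ // p.1 + p.2 = i}),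
      ((⋀[R]^(p.val.1) A) ⊗[R] (⋀[R]^(p.val.2) B))) :=
  proj R A B i
    ∘ₗ (TensorProduct.directSum R R (fun k : ℕ => ↥(⋀[R]^k A)) (fun l : ℕ => ↥(⋀[R]^l B))).toLinearMap
    ∘ₗ (GradedTensorProduct.auxEquiv R (fun k : ℕ => ⋀[R]^k A) (fun k : ℕ => ⋀[R]^k B)).toLinearMap
    ∘ₗ (hAlg R A B).toLinearMap
    ∘ₗ (⋀[R]^i (A × B) : Submodule R (ExteriorAlgebra R (A × B))).subtype

lemma Psi_Phi : (Psi R A B i) ∘ₗ (Phi R A B i) = LinearMap.id := by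
  refine DirectSum.linearMap_ext _ fun p => ?_
  obtain ⟨⟨k, l⟩, hkl⟩ := p
  apply TensorProduct.ext'
  intro x y
  simp only [LinearMap.comp_apply, LinearMap.id_apply]
  rw [Phi, DirectSum.toModule_lof]
  rw [Psi]
  simp only [LinearMap.comp_apply, LinearEquiv.coe_coe, AlgHom.toLinearMap_apply,
    Submodule.coe_subtype]
  rw [mu_tmul, hAlg_mul, GradedTensorProduct.auxEquiv_tmul]
  rw [DirectSum.decompose_coe, DirectSum.decompose_coe, ← DirectSum.lof_eq_of R,
    ← DirectSum.lof_eq_of R, TensorProduct.directSum_lof_tmul_lof (R := R) (S := R)]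
  rw [proj, DirectSum.toModule_lof]
  simp only [hkl, dif_pos]


lemma Phi_lof_tmul (n : ℕ) (p : {p : ℕ × ℕ // p.1 + p.2 = n})
    (x : ⋀[R]^(p.val.1) A) (y : ⋀[R]^(p.val.2) B) :
    ((Phi R A B n (DirectSum.lof R _
        (fun p : {p : ℕ × ℕ // p.1 + p.2 = n} => ((⋀[R]^(p.val.1) A) ⊗[R] (⋀[R]^(p.val.2) B)))
        p (x ⊗ₜ[R] y)) : ⋀[R]^n (A × B)) : ExteriorAlgebra R (A × B))
      = ExteriorAlgebra.map (LinearMap.inl R A B) (x : ExteriorAlgebra R A)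
          * ExteriorAlgebra.map (LinearMap.inr R A B) (y : ExteriorAlgebra R B) := by
  rw [Phi, DirectSum.toModule_lof, mu_tmul]

set_option maxHeartbeats 1000000 in
set_option synthInstance.maxHeartbeats 400000 in
lemma range_claim (n : ℕ) (z : ExteriorAlgebra R (A × B)) (hz : z ∈ ⋀[R]^n (A × B)) :
    z ∈ LinearMap.range
      ((⋀[R]^n (A × B) : Submodule R (ExteriorAlgebra R (A × B))).subtype ∘ₗ Phi R A B n) := by
  refine Submodule.pow_induction_on_left' (M := LinearMap.range (ι R (M := A × B)))
    (C := fun n z _ => z ∈ LinearMap.range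
      ((⋀[R]^n (A × B) : Submodule R (ExteriorAlgebra R (A × B))).subtype ∘ₗ Phi R A B n))
    ?_ ?_ ?_ hz
  · intro r
    refine ⟨DirectSum.lof R _
      (fun p : {p : ℕ × ℕ // p.1 + p.2 = 0} => ((⋀[R]^(p.val.1) A) ⊗[R] (⋀[R]^(p.val.2) B)))
      ⟨(0, 0), rfl⟩ ((⟨algebraMap R _ r, mem0 r⟩ : ⋀[R]^0 A) ⊗ₜ[R] (⟨1, one_mem0⟩ : ⋀[R]^0 B)), ?_⟩
    rw [LinearMap.comp_apply, Submodule.coe_subtype, Phi_lof_tmul]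
    show ExteriorAlgebra.map (LinearMap.inl R A B) (algebraMap R _ r)
      * ExteriorAlgebra.map (LinearMap.inr R A B) 1 = _
    rw [AlgHom.commutes, map_one, mul_one]
  · intro x y n hx hy ihx ihy
    exact add_mem ihx ihy
  · rintro m ⟨⟨a, b⟩, rfl⟩ n z hz ih
    obtain ⟨v, hv⟩ := ih
    rw [← hv]
    clear hv hz z
    have key : ∀ v, ι R (a, b)
        * (((⋀[R]^n (A × B) : Submodule R (ExteriorAlgebra R (A × B))).subtype ∘ₗ Phi R A B n) v)
        ∈ LinearMap.range ((⋀[R]^(n+1) (A × B) :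
            Submodule R (ExteriorAlgebra R (A × B))).subtype ∘ₗ Phi R A B (n+1)) := by
      intro v
      induction v using DirectSum.induction_on with
      | zero => rw [map_zero, mul_zero]; exact zero_mem _
      | add v₁ v₂ ih₁ ih₂ => rw [map_add, mul_add]; exact add_mem ih₁ ih₂
      | of p w =>
        obtain ⟨⟨k, l⟩, hkl⟩ := p
        simp only [Prod.fst, Prod.snd] at hkl
        induction w using TensorProduct.induction_on with
        | zero => rw [map_zero, map_zero, mul_zero]; exact zero_mem _
        | add w₁ w₂ ih₁ ih₂ =>
            rw [map_add, map_add, mul_add]; exact add_mem ih₁ ih₂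
        | tmul x y =>
          rw [← DirectSum.lof_eq_of R, LinearMap.comp_apply, Submodule.coe_subtype,
            Phi_lof_tmul]
          have hab : ι R ((a, b) : A × B)
              = ExteriorAlgebra.map (LinearMap.inl R A B) (ι R a)
                + ExteriorAlgebra.map (LinearMap.inr R A B) (ι R b) := by
            rw [ExteriorAlgebra.map_apply_ι, ExteriorAlgebra.map_apply_ι, ← map_add]
            congr 1
            simp
          rw [hab, add_mul]
          apply add_mem
          · rw [← mul_assoc, ← map_mul]
            refine ⟨DirectSum.lof R _
              (fun p : {p : ℕ × ℕ // p.1 + p.2 = n+1} =>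
                ((⋀[R]^(p.val.1) A) ⊗[R] (⋀[R]^(p.val.2) B)))
              ⟨(k+1, l), by omega⟩
              ((⟨ι R a * (x : ExteriorAlgebra R A), ι_mul_mem a x.2⟩ : ⋀[R]^(k+1) A)
                ⊗ₜ[R] y), ?_⟩
            rw [LinearMap.comp_apply, Submodule.coe_subtype, Phi_lof_tmul]
          · have hc := supercomm ((LinearMap.inr R A B) b)
              (map_mem (LinearMap.inl R A B) x.2)
            rw [ExteriorAlgebra.map_apply_ι (LinearMap.inr R A B) b, ← mul_assoc, hc,
              smul_mul_assoc, mul_assoc, ← ExteriorAlgebra.map_apply_ι (LinearMap.inr R A B) b,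
              ← map_mul]
            refine Submodule.smul_mem _ _ ?_
            refine ⟨DirectSum.lof R _
              (fun p : {p : ℕ × ℕ // p.1 + p.2 = n+1} =>
                ((⋀[R]^(p.val.1) A) ⊗[R] (⋀[R]^(p.val.2) B)))
              ⟨(k, l+1), by omega⟩
              (x ⊗ₜ[R] (⟨ι R b * (y : ExteriorAlgebra R B), ι_mul_mem b y.2⟩ : ⋀[R]^(l+1) B)),
              ?_⟩
            rw [LinearMap.comp_apply, Submodule.coe_subtype, Phi_lof_tmul]
    exact key v

lemma Phi_surjective : Function.Surjective (Phi R A B i) := by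
  intro w
  obtain ⟨v, hv⟩ := range_claim R A B i (w : ExteriorAlgebra R (A × B)) w.2
  refine ⟨v, Subtype.ext ?_⟩
  simpa using hv

end ExtProdAux

/-- For `R`-modules `A`, `B` over a commutative ring `R` and `i : ℕ`, the `i`-th exterior
power of `A ⊕ B` is isomorphic to the direct sum over `k + l = i` of `Λ^k A ⊗ Λ^l B`. -/
theorem exteriorPower_prod_iso (R : Type) [CommRing R]
    (A B : Type) [AddCommGroup A] [Module R A] [AddCommGroup B] [Module R B] (i : ℕ) :
    Nonempty (⋀[R]^i (A × B) ≃ₗ[R]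
      ⨁ (p : {p : ℕ × ℕ // p.1 + p.2 = i}), ((⋀[R]^(p.val.1) A) ⊗[R] (⋀[R]^(p.val.2) B))) := by
  refine ⟨?_⟩
  have hinj : Function.Injective (ExtProdAux.Phi R A B i) := by
    have hli : Function.LeftInverse (ExtProdAux.Psi R A B i) (ExtProdAux.Phi R A B i) := fun v => by
      have := DFunLike.congr_fun (ExtProdAux.Psi_Phi R A B i) v
      simpa using this
    exact hli.injective
  exact (LinearEquiv.ofBijective (ExtProdAux.Phi R A B i)
    ⟨hinj, ExtProdAux.Phi_surjective R A B i⟩).symm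
end

section
/- Let 0 → F_n → ⋯ → F_1 → F_0 → G → 0 be an exact sequence of functors Mod(R) → Mod(R) such that each F_i is (n−i)-connected. Then G is n-connected. -/
/-!
Evaluating the resolution on a `k`-connected simplicial module `A` and taking alternating
face map complexes gives an exact sequence of chain complexes
`0 → C_{n+1} → ⋯ → C_1 → C_0 → 0` with `C_{i+1} = F_i(A)` acyclic in degrees `≤ k + n - i`.
Splitting it into short exact sequences `0 → K_{i+1} → C_{i+2} → K_i → 0` of kernels
`K_i = ker (C_{i+1} → C_i)`, with `K_n = 0`, the long exact homology sequences show by descending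
induction that `K_i` is acyclic in degrees `< k + n - i`; the last one, `0 → K_0 → C_1 → C_0 → 0`,
then makes `C_0 = G(A)` acyclic in degrees `≤ k + n`.
-/

open CategoryTheory Limits AlgebraicTopology

variable {R : Type} [CommRing R]

/-- `π_j` of a simplicial `R`-module: the `j`-th homology of its normalized Moore complex. -/
noncomputable def simplicialPi (A : SimplicialObject (ModuleCat R)) (j : ℕ) : ModuleCat R :=
  ((normalizedMooreComplex (ModuleCat R)).obj A).homology j

/-- A functor `F : Mod(R) → Mod(R)` is `n`-connected if for every `k ≥ 0` and every
`k`-connected simplicial `R`-module `A•` with free components, the simplicial module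
`F(A•)` (applying `F` degreewise) is `(k+n)`-connected. -/
def IsConnectedFunctor {R : Type} [CommRing R] (F : ModuleCat R ⥤ ModuleCat R) (n : ℕ) :
    Prop :=
  ∀ (k : ℕ) (A : SimplicialObject (ModuleCat R)),
    (∀ m : SimplexCategoryᵒᵖ, Module.Free R (A.obj m)) →
    (∀ i ≤ k, IsZero (simplicialPi A i)) →
    ∀ i ≤ k + n, IsZero (simplicialPi (A ⋙ F) i)

section Abelian

variable {𝒞 : Type*} [Category 𝒞] [Abelian 𝒞]

lemma CategoryTheory.ShortComplex.ShortExact.isZero_homology_X₃_of_le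
    {S : ShortComplex (ChainComplex 𝒞 ℕ)} (hS : S.ShortExact) {N : ℕ}
    (h₂ : ∀ j ≤ N, IsZero (S.X₂.homology j)) (h₁ : ∀ j < N, IsZero (S.X₁.homology j)) :
    ∀ j ≤ N, IsZero (S.X₃.homology j)
  | 0, _ =>
    have := hS.epi_g
    have := HomologicalComplex.epi_homologyMap_of_epi_of_not_rel S.g 0 (by simp)
    (h₂ 0 N.zero_le).of_epi (HomologicalComplex.homologyMap S.g 0)
  | j + 1, hj =>
    (hS.homology_exact₃ (j + 1) j (by simp)).isZero_X₂
      ((h₂ (j + 1) hj).eq_of_src _ _) ((h₁ j (by omega)).eq_of_tgt _ _)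

noncomputable def ChainComplex.kernelShortComplex (C : ChainComplex 𝒞 ℕ) (i : ℕ) :
    ShortComplex 𝒞 :=
  ShortComplex.mk (kernel.ι (C.d (i + 2) (i + 1)))
    (kernel.lift (C.d (i + 1) i) (C.d (i + 2) (i + 1)) (C.d_comp_d _ _ _))
    (by simp [← cancel_mono (kernel.ι (C.d (i + 1) i))])

lemma ChainComplex.kernelShortComplex_shortExact (C : ChainComplex 𝒞 ℕ) (i : ℕ)
    (h : C.ExactAt (i + 1)) : (C.kernelShortComplex i).ShortExact where
  exact := ShortComplex.exact_of_f_is_kernel _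
    (isKernelOfComp _ _ (kernelIsKernel _) _ (kernel.lift_ι _ _ _))
  mono_f := by dsimp only [kernelShortComplex]; infer_instance
  epi_g := ((C.exactAt_iff' (i + 2) (i + 1) i (by simp) (by simp)).1 h).epi_kernelLift

variable {C : ChainComplex (ChainComplex 𝒞 ℕ) ℕ} {n N : ℕ}

lemma ChainComplex.isZero_homology_kernel_of_exact (hexact : ∀ i < n, C.ExactAt (i + 1))
    (hmono : Mono (C.d (n + 1) n))
    (hC : ∀ i ≤ n, ∀ j, i + j ≤ N → IsZero ((C.X (i + 1)).homology j)) {i : ℕ} (hi : i ≤ n) :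
    ∀ j, i + j < N → IsZero ((kernel (C.d (i + 1) i)).homology j) := by
  induction hi using Nat.decreasingInduction with
  | self =>
    exact fun j _ => (HomologicalComplex.homologyFunctor _ _ j).map_isZero (isZero_kernel_of_mono _)
  | of_succ i hi ih =>
    intro j hj
    exact (C.kernelShortComplex_shortExact i (hexact i hi)).isZero_homology_X₃_of_le
      (N := N - (i + 1)) (fun j hj => hC (i + 1) hi j (by omega)) (fun j hj => ih j (by omega))
      j (by omega)

theorem ChainComplex.isZero_homology_of_exact (hexact : ∀ i < n, C.ExactAt (i + 1))
    (hepi : Epi (C.d 1 0)) (hmono : Mono (C.d (n + 1) n))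
    (hC : ∀ i ≤ n, ∀ j, i + j ≤ N → IsZero ((C.X (i + 1)).homology j)) :
    ∀ j ≤ N, IsZero ((C.X 0).homology j) :=
  ShortComplex.ShortExact.isZero_homology_X₃_of_le
    { exact := ShortComplex.exact_kernel (C.d 1 0) }
    (fun j hj => hC 0 n.zero_le j (by omega))
    (fun j hj => isZero_homology_kernel_of_exact hexact hmono hC n.zero_le j (by omega))

end Abelian

lemma simplicialPi_isZero_iff (X : SimplicialObject (ModuleCat R)) (j : ℕ) :
    IsZero (simplicialPi X j) ↔ IsZero (((alternatingFaceMapComplex _).obj X).homology j) :=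
  (DoldKan.homotopyEquivNormalizedMooreComplexAlternatingFaceMapComplex.toHomologyIso j).isZero_iff

section Evaluation

variable {𝒜 : Type*} [Category 𝒜]

/-- The complex of chain complexes `i ↦ C(D_i ∘ A)`, with `C` the alternating face map complex. -/
noncomputable def ChainComplex.alternatingFaceMapComplexAt
    (D : ChainComplex (𝒜 ⥤ ModuleCat R) ℕ) (A : SimplicialObject 𝒜) :
    ChainComplex (ChainComplex (ModuleCat R) ℕ) ℕ :=
  (((Functor.whiskeringLeft _ _ _).obj A ⋙
    alternatingFaceMapComplex (ModuleCat R)).mapHomologicalComplex _).obj D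

variable (D : ChainComplex (𝒜 ⥤ ModuleCat R) ℕ) (A : SimplicialObject 𝒜)

lemma ChainComplex.exactAt_alternatingFaceMapComplexAt {i : ℕ}
    (h : ∀ M, Function.Exact ((D.d (i + 2) (i + 1)).app M) ((D.d (i + 1) i).app M)) :
    (D.alternatingFaceMapComplexAt A).ExactAt (i + 1) := by
  rw [HomologicalComplex.exactAt_iff' _ (i + 2) (i + 1) i (by simp) (by simp),
    HomologicalComplex.exact_iff_degreewise_exact]
  exact fun _ => (ShortComplex.ShortExact.moduleCat_exact_iff_function_exact _).2 (h _)

lemma ChainComplex.epi_alternatingFaceMapComplexAt_d {i j : ℕ}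
    (h : ∀ M, Function.Surjective ((D.d i j).app M)) :
    Epi ((D.alternatingFaceMapComplexAt A).d i j) :=
  HomologicalComplex.epi_of_epi_f _ fun _ => (ModuleCat.epi_iff_surjective _).2 (h _)

lemma ChainComplex.mono_alternatingFaceMapComplexAt_d {i j : ℕ}
    (h : ∀ M, Function.Injective ((D.d i j).app M)) :
    Mono ((D.alternatingFaceMapComplexAt A).d i j) :=
  HomologicalComplex.mono_of_mono_f _ fun _ => (ModuleCat.mono_iff_injective _).2 (h _)

end Evaluation

theorem isConnectedFunctor_of_exact_resolution_general (R : Type) [CommRing R] (n : ℕ)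
    (D : ChainComplex (ModuleCat R ⥤ ModuleCat R) ℕ)
    (hinj : ∀ M : ModuleCat R, Function.Injective ((D.d (n + 1) n).app M))
    (hexact : ∀ (i : ℕ) (M : ModuleCat R),
      Function.Exact ((D.d (i + 2) (i + 1)).app M) ((D.d (i + 1) i).app M))
    (hsurj : ∀ M : ModuleCat R, Function.Surjective ((D.d 1 0).app M))
    (hconn : ∀ i ≤ n, IsConnectedFunctor (D.X (i + 1)) (n - i)) :
    IsConnectedFunctor (D.X 0) n := by
  intro k A hfree hA j hj
  rw [simplicialPi_isZero_iff]
  exact ChainComplex.isZero_homology_of_exact (N := k + n)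
    (fun i _ => D.exactAt_alternatingFaceMapComplexAt A (hexact i))
    (D.epi_alternatingFaceMapComplexAt_d A hsurj) (D.mono_alternatingFaceMapComplexAt_d A hinj)
    (fun i hi j hj => (simplicialPi_isZero_iff _ j).1 (hconn i hi k A hfree hA j (by omega))) j hj

/-- Let `0 → F_n → ⋯ → F_1 → F_0 → G → 0` be an exact sequence of functors
`Mod(R) → Mod(R)` (exact after evaluation at every module) such that `F_i` is
`(n−i)`-connected.  Then `G` is `n`-connected.  The sequence is encoded as a chain
complex `D` of functors with `D.X 0 = G` and `D.X (i+1) = F_i`, vanishing above degree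
`n+1`, exact at every evaluation. -/
theorem isConnectedFunctor_of_exact_resolution (R : Type) [CommRing R] (n : ℕ)
    (D : ChainComplex (ModuleCat R ⥤ ModuleCat R) ℕ)
    (htop : ∀ i, n + 1 < i → IsZero (D.X i))
    (hinj : ∀ M : ModuleCat R, Function.Injective ((D.d (n + 1) n).app M))
    (hexact : ∀ (i : ℕ) (M : ModuleCat R),
      Function.Exact ((D.d (i + 2) (i + 1)).app M) ((D.d (i + 1) i).app M))
    (hsurj : ∀ M : ModuleCat R, Function.Surjective ((D.d 1 0).app M))
    (hconn : ∀ i ≤ n, IsConnectedFunctor (D.X (i + 1)) (n - i)) :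
    IsConnectedFunctor (D.X 0) n :=
  isConnectedFunctor_of_exact_resolution_general R n D hinj hexact hsurj hconn
end
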